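/- Let α > 0, n ∈ ℤ, and a ∈ ℚ_p with ‖a‖ = p^n. Then ∫_{‖x‖ = p^n} ‖x - a‖^{α-1} dμ(x) = ((p - 2 + p^{-α})/(p(1 - p^{-α}))) · ‖a‖^α. -/

import Mathlib

/-!
The ball `‖x‖ ≤ p ^ (k + 1)` is the disjoint union of `p` translates of the ball `‖x‖ ≤ p ^ k`
(one for each residue digit), so balls have measure `p ^ k` and spheres `p ^ k (1 - 1/p)`.
On the sphere `‖x‖ = ‖a‖ = p ^ n` the ultrametric inequality gives `‖x - a‖ = p ^ n` except on
the ball `‖x - a‖ ≤ p ^ (n - 1)`. There, after translating by `a`, the integral of `‖y‖ ^ (α - 1)`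
splits over the spheres `‖y‖ = p ^ (n - 1 - m)` into a geometric series of ratio `p ^ (-α)`.
-/

open MeasureTheory Metric Set Function
open scoped ENNReal

lemma setLIntegral_closedBall_comp_sub {E : Type*} [NormedAddCommGroup E] [MeasurableSpace E]
    [BorelSpace E] (μ : Measure E) [μ.IsAddRightInvariant] (f : E → ℝ≥0∞) (a : E) (r : ℝ) :
    ∫⁻ x in closedBall a r, f (x - a) ∂μ = ∫⁻ x in closedBall 0 r, f x ∂μ := by
  have hpre : (· + a) ⁻¹' closedBall a r = closedBall 0 r := by
    ext x
    simp [dist_eq_norm]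
  rw [← (measurePreserving_add_right μ a).setLIntegral_comp_preimage_emb
    (Homeomorph.addRight a).measurableEmbedding, hpre]
  simp only [add_sub_cancel_right]

namespace Padic

variable {p : ℕ} [Fact p.Prime]

lemma one_lt_natCast_of_prime : (1 : ℝ) < p := Nat.one_lt_cast.2 (Fact.out : p.Prime).one_lt

lemma natCast_pos_of_prime : (0 : ℝ) < p := zero_lt_one.trans one_lt_natCast_of_prime

lemma natCast_rpow_neg_lt_one {α : ℝ} (hα : 0 < α) : (p : ℝ) ^ (-α) < 1 :=
  Real.rpow_lt_one_of_one_lt_of_neg one_lt_natCast_of_prime (neg_neg_of_pos hα)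

lemma ball_zpow_eq_closedBall (c : ℚ_[p]) (k : ℤ) :
    ball c ((p : ℝ) ^ k) = closedBall c ((p : ℝ) ^ (k - 1)) := by
  ext x
  simp only [mem_ball, mem_closedBall, dist_eq_norm, norm_lt_pow_iff_norm_le_pow_sub_one]

lemma sphere_zpow_eq_closedBall_sdiff (c : ℚ_[p]) (k : ℤ) :
    sphere c ((p : ℝ) ^ k) = closedBall c ((p : ℝ) ^ k) \ closedBall c ((p : ℝ) ^ (k - 1)) := by
  rw [← ball_zpow_eq_closedBall, closedBall_sdiff_ball]

lemma closedBall_zpow_add_one_eq_biUnion (k : ℤ) :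
    closedBall (0 : ℚ_[p]) ((p : ℝ) ^ (k + 1)) =
      ⋃ j ∈ Finset.range p, closedBall ((j : ℚ_[p]) * (p : ℚ_[p]) ^ (-(k + 1))) ((p : ℝ) ^ k) := by
  have hp : (0 : ℝ) < p := natCast_pos_of_prime
  ext x
  simp only [mem_iUnion, Finset.mem_range, exists_prop, mem_closedBall, dist_eq_norm, sub_zero]
  constructor
  · intro hx
    let z : ℤ_[p] := ⟨x * (p : ℚ_[p]) ^ (k + 1), by
      rw [norm_mul, norm_p_zpow, zpow_neg, ← div_eq_mul_inv, div_le_one (zpow_pos hp _)]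
      exact hx⟩
    refine ⟨z.zmodRepr, z.zmodRepr_lt_p, ?_⟩
    have hz : ‖(z : ℚ_[p]) - z.zmodRepr‖ ≤ (p : ℝ) ^ (-1 : ℤ) := by
      have := z.norm_sub_zmodRepr_lt_one
      rw [PadicInt.norm_def, PadicInt.coe_sub, PadicInt.coe_natCast] at this
      simpa using (norm_lt_pow_iff_norm_le_pow_sub_one _ 0).1 (by simpa using this)
    have hzx : (z : ℚ_[p]) * (p : ℚ_[p]) ^ (-(k + 1)) = x := by
      change x * _ * _ = x
      rw [mul_assoc, ← zpow_add₀ (by exact_mod_cast hp.ne'), add_neg_cancel,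
        zpow_zero, mul_one]
    rw [← hzx, ← sub_mul, norm_mul, norm_p_zpow, neg_neg]
    calc _ ≤ (p : ℝ) ^ (-1 : ℤ) * (p : ℝ) ^ (k + 1) := by gcongr
      _ = (p : ℝ) ^ k := by rw [← zpow_add₀ hp.ne']; ring_nf
  · rintro ⟨j, -, hx⟩
    have hc : (j : ℚ_[p]) * (p : ℚ_[p]) ^ (-(k + 1)) ∈ closedBall 0 ((p : ℝ) ^ (k + 1)) := by
      rw [mem_closedBall_zero_iff, norm_mul, norm_p_zpow, neg_neg]
      exact mul_le_of_le_one_left (zpow_pos hp _).le (by exact_mod_cast norm_int_le_one j)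
    rw [← mem_closedBall_zero_iff, IsUltrametricDist.closedBall_eq_of_mem hc]
    exact closedBall_subset_closedBall
      (zpow_le_zpow_right₀ one_lt_natCast_of_prime.le (by omega : k ≤ k + 1))
      (mem_closedBall_iff_norm.2 hx)

lemma pairwiseDisjoint_closedBall_natCast_mul (k : ℤ) :
    (Finset.range p : Set ℕ).PairwiseDisjoint
      fun j ↦ closedBall ((j : ℚ_[p]) * (p : ℚ_[p]) ^ (-(k + 1))) ((p : ℝ) ^ k) := by
  intro i hi j hj hij
  refine (IsUltrametricDist.closedBall_eq_or_disjoint _ _ _).resolve_left fun h ↦ ?_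
  have hmem : ((i : ℚ_[p]) * (p : ℚ_[p]) ^ (-(k + 1))) ∈
      closedBall ((j : ℚ_[p]) * (p : ℚ_[p]) ^ (-(k + 1))) ((p : ℝ) ^ k) :=
    h ▸ mem_closedBall_self (by positivity)
  -- distinct digits `i, j < p` are incongruent mod `p`, so the centres are `p ^ (k + 1)` apart
  have hij' : ¬ ‖((i - j : ℤ) : ℚ_[p])‖ < 1 := by
    rw [norm_intCast_lt_one_iff]
    intro hdvd
    simp only [Finset.coe_range, mem_Iio] at hi hj
    have := Int.eq_zero_of_abs_lt_dvd hdvd (by rw [abs_lt]; omega)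
    omega
  rw [mem_closedBall, dist_eq_norm, ← sub_mul, norm_mul, norm_p_zpow, neg_neg] at hmem
  push_cast at hij'
  refine hij' (lt_of_mul_lt_mul_right (a := (p : ℝ) ^ (k + 1)) ?_ (by positivity))
  rw [one_mul]
  exact hmem.trans_lt (zpow_lt_zpow_right₀ one_lt_natCast_of_prime (lt_add_one k))

lemma closedBall_zpow_sdiff_zero (k : ℤ) :
    closedBall (0 : ℚ_[p]) ((p : ℝ) ^ k) \ {0} = ⋃ m : ℕ, sphere 0 ((p : ℝ) ^ (k - m)) := by
  ext x
  simp only [mem_sdiff, mem_singleton_iff, mem_iUnion, mem_closedBall_zero_iff,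
    mem_sphere_zero_iff_norm]
  constructor
  · rintro ⟨hx, hx0⟩
    rw [norm_eq_zpow_neg_valuation hx0] at hx ⊢
    have := (zpow_le_zpow_iff_right₀ one_lt_natCast_of_prime).1 hx
    exact ⟨(k + x.valuation).toNat, by congr 1; omega⟩
  · rintro ⟨m, hm⟩
    refine ⟨hm ▸ zpow_le_zpow_right₀ one_lt_natCast_of_prime.le (by omega), ?_⟩
    rintro rfl
    exact (zpow_pos (natCast_pos_of_prime) _).ne (by simpa using hm)

lemma pairwise_disjoint_sphere_zpow_sub (k : ℤ) :
    Pairwise (Disjoint on fun m : ℕ ↦ sphere (0 : ℚ_[p]) ((p : ℝ) ^ (k - m))) := by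
  refine fun m m' hm ↦ Set.disjoint_left.2 fun x hx hx' ↦ hm ?_
  rw [mem_sphere_zero_iff_norm] at hx hx'
  have := zpow_right_injective₀ (natCast_pos_of_prime)
    one_lt_natCast_of_prime.ne' (hx.symm.trans hx')
  omega

lemma closedBall_subset_sphere {n : ℤ} {a : ℚ_[p]} (ha : ‖a‖ = (p : ℝ) ^ n) :
    closedBall a ((p : ℝ) ^ (n - 1)) ⊆ sphere 0 ((p : ℝ) ^ n) := by
  intro x hx
  rw [← ball_zpow_eq_closedBall, mem_ball, dist_eq_norm, ← ha] at hx
  rw [mem_sphere_zero_iff_norm, ← ha, ← sub_add_cancel x a,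
    IsUltrametricDist.norm_add_eq_max_of_norm_ne_norm hx.ne, max_eq_right hx.le]

lemma norm_sub_eq_of_mem_sphere_sdiff_closedBall {n : ℤ} {a x : ℚ_[p]}
    (ha : ‖a‖ = (p : ℝ) ^ n) (hx : x ∈ sphere 0 ((p : ℝ) ^ n) \ closedBall a ((p : ℝ) ^ (n - 1))) :
    ‖x - a‖ = (p : ℝ) ^ n := by
  obtain ⟨hxS, hxA⟩ := hx
  rw [mem_sphere_zero_iff_norm] at hxS
  rw [← ball_zpow_eq_closedBall, mem_ball, dist_eq_norm, not_lt] at hxA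
  refine le_antisymm ?_ hxA
  calc ‖x - a‖ = ‖x + -a‖ := by rw [sub_eq_add_neg]
    _ ≤ max ‖x‖ ‖-a‖ := IsUltrametricDist.norm_add_le_max x (-a)
    _ = (p : ℝ) ^ n := by rw [norm_neg, hxS, ha, max_self]

section Measure

variable [MeasurableSpace ℚ_[p]] [BorelSpace ℚ_[p]] (μ : Measure ℚ_[p]) [μ.IsAddHaarMeasure]

lemma addHaar_closedBall_zpow_add_one (k : ℤ) :
    μ (closedBall 0 ((p : ℝ) ^ (k + 1))) = p * μ (closedBall 0 ((p : ℝ) ^ k)) := by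
  rw [closedBall_zpow_add_one_eq_biUnion, measure_biUnion_finset
    (pairwiseDisjoint_closedBall_natCast_mul k) fun _ _ ↦ measurableSet_closedBall]
  simp only [Measure.addHaar_closedBall_center, Finset.sum_const, Finset.card_range, nsmul_eq_mul]

lemma addHaar_closedBall_zpow (hμ : μ (closedBall 0 1) = 1) (c : ℚ_[p]) (k : ℤ) :
    μ (closedBall c ((p : ℝ) ^ k)) = ENNReal.ofReal ((p : ℝ) ^ k) := by
  have hp : (0 : ℝ) < p := natCast_pos_of_prime
  have hp' (k : ℤ) :
      (p : ℝ≥0∞) * ENNReal.ofReal ((p : ℝ) ^ k) = ENNReal.ofReal ((p : ℝ) ^ (k + 1)) := by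
    rw [← ENNReal.ofReal_natCast, ← ENNReal.ofReal_mul hp.le, zpow_add_one₀ hp.ne', mul_comm]
  rw [Measure.addHaar_closedBall_center]
  induction k using Int.induction_on with
  | zero => simpa using hμ
  | succ i ih => rw [addHaar_closedBall_zpow_add_one, ih, ← hp']
  | pred i ih =>
    rw [← sub_add_cancel (-(i : ℤ)) 1, addHaar_closedBall_zpow_add_one, ← hp'] at ih
    exact (ENNReal.mul_right_inj (by exact_mod_cast (Fact.out : p.Prime).ne_zero)
      (ENNReal.natCast_ne_top p)).1 ih

lemma addHaar_sphere_zpow (hμ : μ (closedBall 0 1) = 1) (c : ℚ_[p]) (k : ℤ) :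
    μ (sphere c ((p : ℝ) ^ k)) = ENNReal.ofReal ((p : ℝ) ^ k * (1 - (p : ℝ)⁻¹)) := by
  have hp : (0 : ℝ) < p := natCast_pos_of_prime
  rw [sphere_zpow_eq_closedBall_sdiff, measure_sdiff
    (closedBall_subset_closedBall (zpow_le_zpow_right₀ one_lt_natCast_of_prime.le (by omega)))
    measurableSet_closedBall.nullMeasurableSet (by simp [addHaar_closedBall_zpow μ hμ]),
    addHaar_closedBall_zpow μ hμ, addHaar_closedBall_zpow μ hμ,
    ← ENNReal.ofReal_sub _ (by positivity), zpow_sub_one₀ hp.ne', mul_one_sub]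

lemma setLIntegral_closedBall_zpow_radial (g : ℝ → ℝ≥0∞) (k : ℤ) :
    ∫⁻ x in closedBall 0 ((p : ℝ) ^ k), g ‖x‖ ∂μ =
      ∑' m : ℕ, g ((p : ℝ) ^ (k - m)) * μ (sphere 0 ((p : ℝ) ^ (k - m))) := by
  rw [← setLIntegral_congr (sdiff_null_ae_eq_self (measure_singleton 0)),
    closedBall_zpow_sdiff_zero, lintegral_iUnion (fun _ ↦ isClosed_sphere.measurableSet)
      (pairwise_disjoint_sphere_zpow_sub k)]
  refine tsum_congr fun m ↦ ?_
  rw [setLIntegral_congr_fun isClosed_sphere.measurableSet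
    fun x hx ↦ by rw [mem_sphere_zero_iff_norm.1 hx], setLIntegral_const]

lemma setLIntegral_closedBall_zpow_norm_rpow (hμ : μ (closedBall 0 1) = 1) {α : ℝ} (hα : 0 < α)
    (k : ℤ) :
    ∫⁻ x in closedBall 0 ((p : ℝ) ^ k), ENNReal.ofReal (‖x‖ ^ (α - 1)) ∂μ =
      ENNReal.ofReal (((p : ℝ) ^ k) ^ α * (1 - (p : ℝ)⁻¹) / (1 - (p : ℝ) ^ (-α))) := by
  have hp : (0 : ℝ) < p := natCast_pos_of_prime
  set q := (p : ℝ) ^ (-α)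
  set C := ((p : ℝ) ^ k) ^ α * (1 - (p : ℝ)⁻¹)
  have hq0 : 0 ≤ q := by positivity
  have hq1 : q < 1 := natCast_rpow_neg_lt_one hα
  have hC : 0 ≤ C :=
    mul_nonneg (by positivity) (sub_nonneg.2 (inv_le_one_of_one_le₀ one_lt_natCast_of_prime.le))
  have hterm (m : ℕ) : ENNReal.ofReal (((p : ℝ) ^ (k - m)) ^ (α - 1)) *
      μ (sphere 0 ((p : ℝ) ^ (k - m))) = ENNReal.ofReal (C * q ^ m) := by
    have hpow : ((p : ℝ) ^ (k - m)) ^ α = ((p : ℝ) ^ k) ^ α * q ^ m := by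
      rw [zpow_sub₀ hp.ne', Real.div_rpow (by positivity) (by positivity), zpow_natCast,
        ← Real.rpow_natCast, ← Real.rpow_natCast, ← Real.rpow_mul hp.le, ← Real.rpow_mul hp.le,
        div_eq_mul_inv, ← Real.rpow_neg hp.le, mul_comm (m : ℝ) α, neg_mul, mul_comm]
    rw [addHaar_sphere_zpow μ hμ, ← ENNReal.ofReal_mul (by positivity), Real.rpow_sub_one
      (by positivity), hpow]
    congr 1
    simp only [C]
    field_simp
  rw [setLIntegral_closedBall_zpow_radial μ fun t ↦ ENNReal.ofReal (t ^ (α - 1)), tsum_congr hterm,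
    ← ENNReal.ofReal_tsum_of_nonneg (fun m ↦ by positivity)
      ((summable_geometric_of_lt_one hq0 hq1).mul_left C),
    tsum_mul_left, tsum_geometric_of_lt_one hq0 hq1, div_eq_mul_inv]

lemma addHaar_sphere_sdiff_closedBall (hμ : μ (closedBall 0 1) = 1) {n : ℤ} {a : ℚ_[p]}
    (ha : ‖a‖ = (p : ℝ) ^ n) :
    μ (sphere 0 ((p : ℝ) ^ n) \ closedBall a ((p : ℝ) ^ (n - 1))) =
      ENNReal.ofReal ((p : ℝ) ^ (n - 1) * (p - 2)) := by
  have hp : (0 : ℝ) < p := natCast_pos_of_prime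
  rw [measure_sdiff (closedBall_subset_sphere ha) measurableSet_closedBall.nullMeasurableSet
    (by simp [addHaar_closedBall_zpow μ hμ]), addHaar_sphere_zpow μ hμ,
    addHaar_closedBall_zpow μ hμ, ← ENNReal.ofReal_sub _ (by positivity)]
  congr 1
  rw [zpow_sub_one₀ hp.ne']
  field_simp
  ring

lemma setLIntegral_sphere_norm_sub_rpow (hμ : μ (closedBall 0 1) = 1) {α : ℝ} (hα : 0 < α)
    {n : ℤ} {a : ℚ_[p]} (ha : ‖a‖ = (p : ℝ) ^ n) :
    ∫⁻ x in sphere 0 ((p : ℝ) ^ n), ENNReal.ofReal (‖x - a‖ ^ (α - 1)) ∂μ =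
      ENNReal.ofReal ((p - 2 + (p : ℝ) ^ (-α)) / (p * (1 - (p : ℝ) ^ (-α))) * ‖a‖ ^ α) := by
  have hp : (0 : ℝ) < p := natCast_pos_of_prime
  have hp2 : (0 : ℝ) ≤ p - 2 := sub_nonneg.2 (by exact_mod_cast (Fact.out : p.Prime).two_le)
  have hpα : 1 < (p : ℝ) ^ α := Real.one_lt_rpow one_lt_natCast_of_prime hα
  have hinner : ∫⁻ x in closedBall a ((p : ℝ) ^ (n - 1)), ENNReal.ofReal (‖x - a‖ ^ (α - 1)) ∂μ =
      ENNReal.ofReal (((p : ℝ) ^ (n - 1)) ^ α * (1 - (p : ℝ)⁻¹) / (1 - (p : ℝ) ^ (-α))) := by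
    rw [setLIntegral_closedBall_comp_sub μ fun x ↦ ENNReal.ofReal (‖x‖ ^ (α - 1)),
      setLIntegral_closedBall_zpow_norm_rpow μ hμ hα]
  have houter : ∫⁻ x in sphere 0 ((p : ℝ) ^ n) \ closedBall a ((p : ℝ) ^ (n - 1)),
      ENNReal.ofReal (‖x - a‖ ^ (α - 1)) ∂μ =
        ENNReal.ofReal (((p : ℝ) ^ n) ^ (α - 1) * ((p : ℝ) ^ (n - 1) * (p - 2))) := by
    rw [setLIntegral_congr_fun (isClosed_sphere.measurableSet.diff measurableSet_closedBall)
      fun x hx ↦ by rw [norm_sub_eq_of_mem_sphere_sdiff_closedBall ha hx], setLIntegral_const,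
      addHaar_sphere_sdiff_closedBall μ hμ ha, ← ENNReal.ofReal_mul (by positivity)]
  have hinner_nonneg :
      0 ≤ ((p : ℝ) ^ (n - 1)) ^ α * (1 - (p : ℝ)⁻¹) / (1 - (p : ℝ) ^ (-α)) := by
    refine div_nonneg (mul_nonneg (by positivity) ?_) ?_ <;> rw [sub_nonneg]
    · exact inv_le_one_of_one_le₀ one_lt_natCast_of_prime.le
    · exact (natCast_rpow_neg_lt_one hα).le
  rw [← union_sdiff_cancel (closedBall_subset_sphere ha), lintegral_union
    (isClosed_sphere.measurableSet.diff measurableSet_closedBall) disjoint_sdiff_right,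
    hinner, houter, ← ENNReal.ofReal_add hinner_nonneg (by positivity), ha]
  congr 1
  rw [zpow_sub_one₀ hp.ne', Real.mul_rpow (by positivity) (by positivity), Real.inv_rpow hp.le,
    Real.rpow_sub_one (by positivity), Real.rpow_neg hp.le]
  have := (sub_pos.2 hpα).ne'
  field_simp
  ring

end Measure

end Padic

open Padic in
theorem padic_integral_sphere_rpow
    (p : ℕ) [Fact p.Prime]
    [MeasurableSpace ℚ_[p]] [BorelSpace ℚ_[p]]
    (μ : Measure ℚ_[p]) [μ.IsAddHaarMeasure]
    (hμ : μ {x : ℚ_[p] | ‖x‖ ≤ 1} = 1)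
    (α : ℝ) (hα : 0 < α) (n : ℤ) (a : ℚ_[p]) (ha : ‖a‖ = (p : ℝ) ^ n) :
    ∫ x in {x : ℚ_[p] | ‖x‖ = (p : ℝ) ^ n}, ‖x - a‖ ^ (α - 1) ∂μ
      = ((p : ℝ) - 2 + (p : ℝ) ^ (-α)) / ((p : ℝ) * (1 - (p : ℝ) ^ (-α))) * ‖a‖ ^ α := by
  have hball : {x : ℚ_[p] | ‖x‖ ≤ 1} = closedBall 0 1 := by ext; simp
  have hsphere : {x : ℚ_[p] | ‖x‖ = (p : ℝ) ^ n} = sphere 0 ((p : ℝ) ^ n) := by ext; simp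
  have hp2 : (0 : ℝ) ≤ p - 2 := sub_nonneg.2 (by exact_mod_cast (Fact.out : p.Prime).two_le)
  rw [hsphere, integral_eq_lintegral_of_nonneg_ae (ae_of_all _ fun x ↦ by positivity)
      (by fun_prop : Measurable fun x : ℚ_[p] ↦ ‖x - a‖ ^ (α - 1)).aestronglyMeasurable,
    setLIntegral_sphere_norm_sub_rpow μ (hball ▸ hμ) hα ha, ENNReal.toReal_ofReal]
  have hq := sub_pos.2 (natCast_rpow_neg_lt_one (p := p) hα)
  exact mul_nonneg (div_nonneg (by positivity) (mul_nonneg (by positivity) hq.le)) (by positivity)
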